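/- Let S be a semiring. If γ_2 = S×S and γ_3 = S×S, then S possesses a bi-absorbing element o_S and n·x = o_S for every x ∈ S and every integer n ≥ 2. -/

import Mathlib

universe u

/-- A semiring in the sense of the paper: a (nonempty) set with an associative
commutative addition and an associative multiplication distributing over
addition from both sides.  No additive or multiplicative identity is assumed. -/
class PaperSemiring (S : Type*) extends Add S, Mul S where
  add_assoc : ∀ a b c : S, a + b + c = a + (b + c)
  add_comm : ∀ a b : S, a + b = b + a
  mul_assoc : ∀ a b c : S, a * b * c = a * (b * c)
  left_distrib : ∀ a b c : S, a * (b + c) = a * b + a * c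
  right_distrib : ∀ a b c : S, (a + b) * c = a * c + b * c

/-- `nfoldAdd n x` is the `n`-fold sum `x + ⋯ + x` (only meaningful for `n ≥ 1`;
we set `nfoldAdd 0 x = x` as a junk value). -/
def nfoldAdd {S : Type*} [Add S] : ℕ → S → S
  | 0, x => x
  | 1, x => x
  | n + 2, x => nfoldAdd (n + 1) x + x

/-- `nfoldMul n x` is the `n`-fold product `x * ⋯ * x` (only meaningful for `n ≥ 1`;
we set `nfoldMul 0 x = x` as a junk value). -/
def nfoldMul {S : Type*} [Mul S] : ℕ → S → S
  | 0, x => x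
  | 1, x => x
  | n + 2, x => nfoldMul (n + 1) x * x

/-- `w` is multiplicatively absorbing. -/
def MulAbsorbing {S : Type*} [Mul S] (w : S) : Prop :=
  ∀ x : S, x * w = w ∧ w * x = w

/-- `w` is a zero element: multiplicatively absorbing and additively neutral. -/
def IsZeroElem {S : Type*} [Add S] [Mul S] (w : S) : Prop :=
  MulAbsorbing w ∧ ∀ x : S, x + w = x

/-- `w` is bi-absorbing: multiplicatively and additively absorbing. -/
def BiAbsorbing {S : Type*} [Add S] [Mul S] (w : S) : Prop :=
  MulAbsorbing w ∧ ∀ x : S, x + w = w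

/-- `I` is an ideal: nonempty, `I+I ⊆ I`, `S·I ⊆ I`, `I·S ⊆ I`. -/
def IsIdealSet {S : Type*} [Add S] [Mul S] (I : Set S) : Prop :=
  I.Nonempty ∧ (∀ a ∈ I, ∀ b ∈ I, a + b ∈ I) ∧
    ∀ s : S, ∀ a ∈ I, s * a ∈ I ∧ a * s ∈ I

/-- `I` is a bi-ideal: nonempty, `S+I ⊆ I`, `S·I ⊆ I`, `I·S ⊆ I`. -/
def IsBiIdealSet {S : Type*} [Add S] [Mul S] (I : Set S) : Prop :=
  I.Nonempty ∧ (∀ s : S, ∀ a ∈ I, s + a ∈ I) ∧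
    ∀ s : S, ∀ a ∈ I, s * a ∈ I ∧ a * s ∈ I

/-- The relation `α_I`:  `(x,y) ∈ α_I` iff `x + a = y + b` for some `a, b ∈ I`. -/
def alphaRel {S : Type*} [Add S] (I : Set S) (x y : S) : Prop :=
  ∃ a ∈ I, ∃ b ∈ I, x + a = y + b

/-- The relation `β_J = (J×J) ∪ id`. -/
def betaRel {S : Type*} (J : Set S) (x y : S) : Prop :=
  (x ∈ J ∧ y ∈ J) ∨ x = y

/-- The relation `γ_n`: `(x,y) ∈ γ_n` iff `n·x = n·y`. -/
def gammaRel {S : Type*} [Add S] (n : ℕ) (x y : S) : Prop :=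
  nfoldAdd n x = nfoldAdd n y

/-- The relation `δ`: `(x,y) ∈ δ` iff `2^i·x = y + u` and `2^i·y = x + v` for
some `i ≥ 0` and `u, v ∈ S`. -/
def deltaRel {S : Type*} [Add S] (x y : S) : Prop :=
  ∃ (i : ℕ) (u v : S), nfoldAdd (2 ^ i) x = y + u ∧ nfoldAdd (2 ^ i) y = x + v

/-- A congruence: an equivalence relation compatible with both operations. -/
def IsCongruence {S : Type*} [Add S] [Mul S] (r : S → S → Prop) : Prop :=
  Equivalence r ∧ (∀ x x' y y' : S, r x x' → r y y' → r (x + y) (x' + y')) ∧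
    ∀ x x' y y' : S, r x x' → r y y' → r (x * y) (x' * y')

/-- `S` is congruence-simple: it has just two congruences (the identity relation
and the full relation, which are distinct). -/
def CongSimple (S : Type*) [Add S] [Mul S] : Prop :=
  (∃ x y : S, x ≠ y) ∧
    ∀ r : S → S → Prop, IsCongruence r → (∀ x y, r x y ↔ x = y) ∨ ∀ x y, r x y

/-- The two-element semiring `𝕋₄`. -/
inductive T4 : Type where | a | b

instance : Add T4 := ⟨fun x y => match x, y with | .a, .a => .a | _, _ => .b⟩
instance : Mul T4 := ⟨fun x y => match x, y with | .b, .b => .b | _, _ => .a⟩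

/-- The two-element semiring `𝕋₈`. -/
inductive T8 : Type where | a | b

instance : Add T8 := ⟨fun _ _ => .a⟩
instance : Mul T8 := ⟨fun x y => match x, y with | .b, .b => .b | _, _ => .a⟩

/-- Isomorphism of semirings (as sets with two binary operations). -/
def SIso (S T : Type*) [Add S] [Mul S] [Add T] [Mul T] : Prop :=
  ∃ f : S ≃ T, (∀ x y : S, f (x + y) = f x + f y) ∧ ∀ x y : S, f (x * y) = f x * f y

/-- Addition of the semiring `V(G)` on `Option G` (`none` plays the role of `o`):
`x + x = x` and `x + y = o` for `x ≠ y`. -/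
noncomputable def vAdd {G : Type*} (x y : Option G) : Option G :=
  haveI := Classical.decEq (Option G)
  if x = y then x else none

/-- Multiplication of the semiring `V(G)` on `Option G`: it extends the one of `G`,
and `o` is multiplicatively absorbing. -/
def vMul {G : Type*} [Mul G] : Option G → Option G → Option G
  | some x, some y => some (x * y)
  | _, _ => none

/-! With `o := x₀ + x₀`, `γ₂ = S × S` says `x + x = o` for every `x`. Distributivity then gives
`x * o = x * (x + x) = x * x + x * x = o`, and `γ₃ = S × S` gives
`x + o = 3·x = 3·o = o`, so `o` is bi-absorbing and every `n·x` with `n ≥ 2` collapses to it. -/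

theorem nfoldAdd_succ {S : Type*} [Add S] {n : ℕ} (hn : n ≠ 0) (x : S) :
    nfoldAdd (n + 1) x = nfoldAdd n x + x := by
  obtain ⟨k, rfl⟩ := Nat.exists_eq_succ_of_ne_zero hn
  rfl

namespace PaperSemiring

variable {S : Type*} [PaperSemiring S] {o : S}

theorem mulAbsorbing_of_add_self_eq (hdouble : ∀ x : S, x + x = o) : MulAbsorbing o := by
  intro x
  constructor
  · calc x * o = x * (x + x) := by rw [hdouble]
      _ = x * x + x * x := left_distrib x x x
      _ = o := hdouble _
  · calc o * x = (x + x) * x := by rw [hdouble]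
      _ = x * x + x * x := right_distrib x x x
      _ = o := hdouble _

theorem add_absorbing_of_add_self_eq (hdouble : ∀ x : S, x + x = o)
    (h3 : ∀ x y : S, gammaRel 3 x y) (x : S) : x + o = o :=
  calc x + o = x + x + x := by rw [hdouble, PaperSemiring.add_comm]
    _ = o + o + o := h3 x o
    _ = o := by rw [hdouble, hdouble]

theorem nfoldAdd_eq_of_add_self_eq (hdouble : ∀ x : S, x + x = o) (habs : ∀ x : S, x + o = o)
    (x : S) {n : ℕ} (hn : 2 ≤ n) : nfoldAdd n x = o := by
  induction n, hn using Nat.le_induction with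
  | base => exact hdouble x
  | succ n hn ih =>
    rw [nfoldAdd_succ (by omega), ih, PaperSemiring.add_comm]
    exact habs x

end PaperSemiring

/-- Let `S` be a semiring.  If `γ_2 = S×S` and `γ_3 = S×S`, then
`S` possesses a bi-absorbing element `o_S` and `n·x = o_S` for every `x ∈ S`
and every integer `n ≥ 2`. -/
theorem stmt_7 {S : Type*} [PaperSemiring S] [Nonempty S]
    (h2 : ∀ x y : S, gammaRel 2 x y) (h3 : ∀ x y : S, gammaRel 3 x y) :
    ∃ o : S, BiAbsorbing o ∧ ∀ x : S, ∀ n : ℕ, 2 ≤ n → nfoldAdd n x = o := by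
  obtain ⟨x₀⟩ := ‹Nonempty S›
  have hdouble : ∀ x : S, x + x = x₀ + x₀ := fun x => h2 x x₀
  have habs := PaperSemiring.add_absorbing_of_add_self_eq hdouble h3
  exact ⟨x₀ + x₀, ⟨PaperSemiring.mulAbsorbing_of_add_self_eq hdouble, habs⟩,
    fun x _ hn => PaperSemiring.nfoldAdd_eq_of_add_self_eq hdouble habs x hn⟩
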